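/- (Lemma 3) Let T be a finite tree with a designated root, with real resistances r_e and reactances x_e on its edges, and let K_r and K_x be the path-sum matrices with weights r_e and x_e respectively. Let Σ_p and Σ_q be symmetric matrices indexed by the non-root vertices, and Σ_pq any matrix indexed by the non-root vertices. Set Σ_ε = K_r Σ_p K_r + K_x Σ_q K_x + K_r Σ_pq K_x + (K_r Σ_pq K_x)^T. Then for any non-root vertex a whose parent b is also non-root: Σ_ε(a,a) - Σ_ε(a,b) - Σ_ε(b,a) + Σ_ε(b,b) = Σ_{c,d ∈ D_a} [ r_{ab}^2 Σ_p(c,d) + x_{ab}^2 Σ_q(c,d) + 2 r_{ab} x_{ab} Σ_pq(c,d) ], where the sum runs over all ordered pairs (c,d) of descendants of a and r_{ab}, x_{ab} are the resistance and reactance of the edge {a,b}. -/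
import Mathlib


open Classical Matrix

/-- A finite tree with a designated root vertex (the slack bus). -/
structure GridTree (V : Type*) [Fintype V] [DecidableEq V] where
  graph : SimpleGraph V
  root : V
  isTree : graph.IsTree

namespace GridTree

variable {V : Type*} [Fintype V] [DecidableEq V] (T : GridTree V)

/-- The unique path (as a walk) from a vertex to the root. -/
noncomputable def pathToRoot (a : V) : T.graph.Walk a T.root :=
  (T.isTree.existsUnique_path a T.root).choose

/-- `E_a`: the set of edges on the unique path from `a` to the root. -/
noncomputable def pathEdges (a : V) : Finset (Sym2 V) :=
  (T.pathToRoot a).edges.toFinset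

/-- `c` is a descendant of `a`: `a` lies on the unique path from `c` to the root
(in particular every vertex is a descendant of itself). -/
def Descendant (c a : V) : Prop := a ∈ (T.pathToRoot c).support

/-- `b` is the parent of `a`: the edge `{a, b}` lies on the path from `a` to the root
(equivalently, `b` is the unique neighbor of `a` on that path). -/
noncomputable def IsParent (a b : V) : Prop := s(a, b) ∈ T.pathEdges a

/-- The path-sum matrix `K_w`, indexed by the non-root vertices:
`K_w(a,b) = ∑_{e ∈ E_a ∩ E_b} w_e`. -/
noncomputable def pathMatrix (w : Sym2 V → ℝ) :
    Matrix {v : V // v ≠ T.root} {v : V // v ≠ T.root} ℝ :=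
  fun a b => ∑ e ∈ T.pathEdges a.1 ∩ T.pathEdges b.1, w e

/-- The reduced weighted graph Laplacian with edge weights `w`, indexed by the
non-root vertices (the row and column of the root are deleted). -/
noncomputable def lap (w : Sym2 V → ℝ) :
    Matrix {v : V // v ≠ T.root} {v : V // v ≠ T.root} ℝ :=
  fun a b =>
    if a = b then ∑ c ∈ Finset.univ.filter (fun c => T.graph.Adj a.1 c), w s(a.1, c)
    else if T.graph.Adj a.1 b.1 then - w s(a.1, b.1) else 0

end GridTree

namespace GridTree

variable {V : Type*} [Fintype V] [DecidableEq V] (T : GridTree V)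

lemma pathToRoot_isPath (a : V) : (T.pathToRoot a).IsPath :=
  (T.isTree.existsUnique_path a T.root).choose_spec.1

lemma pathToRoot_unique {a : V} (p : T.graph.Walk a T.root) (hp : p.IsPath) :
    p = T.pathToRoot a :=
  (T.isTree.existsUnique_path a T.root).choose_spec.2 p hp

lemma cons_of_edge {G : SimpleGraph V} {u v w : V} (p : G.Walk u w) (hp : p.IsPath)
    (he : s(u, v) ∈ p.edges) :
    ∃ (h : G.Adj u v) (q : G.Walk v w), p = SimpleGraph.Walk.cons h q := by
  cases p with
  | nil => simp at he
  | @cons _ c _ h q =>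
    rw [SimpleGraph.Walk.edges_cons, List.mem_cons] at he
    rcases he with he | he
    · rcases Sym2.eq_iff.1 he with ⟨-, rfl⟩ | ⟨rfl, rfl⟩
      · exact ⟨h, q, rfl⟩
      · exact absurd h (G.irrefl)
    · have : u ∈ q.support := SimpleGraph.Walk.fst_mem_support_of_mem_edges q he
      exact absurd this ((SimpleGraph.Walk.cons_isPath_iff h q).1 hp).2

lemma parent_decomp {a b : V} (hab : T.IsParent a b) :
    ∃ h : T.graph.Adj a b, T.pathToRoot a = SimpleGraph.Walk.cons h (T.pathToRoot b) := by
  have he : s(a, b) ∈ (T.pathToRoot a).edges := by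
    simpa [IsParent, pathEdges] using hab
  obtain ⟨h, q, hq⟩ := cons_of_edge _ (T.pathToRoot_isPath a) he
  have hqp : q.IsPath := by
    have := T.pathToRoot_isPath a
    rw [hq, SimpleGraph.Walk.cons_isPath_iff] at this
    exact this.1
  exact ⟨h, by rw [hq, T.pathToRoot_unique q hqp]⟩

lemma pathEdges_parent {a b : V} (hab : T.IsParent a b) :
    T.pathEdges a = insert s(a, b) (T.pathEdges b) ∧ s(a, b) ∉ T.pathEdges b := by
  obtain ⟨h, hdec⟩ := T.parent_decomp hab
  constructor
  · rw [pathEdges, hdec, SimpleGraph.Walk.edges_cons]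
    ext e; simp [pathEdges]
  · intro hmem
    have hmem' : s(a, b) ∈ (T.pathToRoot b).edges := by
      simpa [pathEdges] using hmem
    have : a ∈ (T.pathToRoot b).support :=
      SimpleGraph.Walk.fst_mem_support_of_mem_edges _ hmem'
    have hp := T.pathToRoot_isPath a
    rw [hdec, SimpleGraph.Walk.cons_isPath_iff] at hp
    exact hp.2 this

lemma descendant_iff_edge {a b : V} (hab : T.IsParent a b) (c : V) :
    T.Descendant c a ↔ s(a, b) ∈ T.pathEdges c := by
  constructor
  · intro hd
    have hq : (T.pathToRoot c).dropUntil a hd = T.pathToRoot a :=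
      T.pathToRoot_unique _ ((T.pathToRoot_isPath c).dropUntil hd)
    have he : s(a, b) ∈ ((T.pathToRoot c).dropUntil a hd).edges := by
      rw [hq]; simpa [IsParent, pathEdges] using hab
    have := SimpleGraph.Walk.edges_dropUntil_subset _ hd he
    simpa [pathEdges] using this
  · intro he
    have he' : s(a, b) ∈ (T.pathToRoot c).edges := by simpa [pathEdges] using he
    exact SimpleGraph.Walk.fst_mem_support_of_mem_edges _ he'

lemma pathMatrix_symm (w : Sym2 V → ℝ) (c d : {v : V // v ≠ T.root}) :
    T.pathMatrix w c d = T.pathMatrix w d c := by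
  unfold pathMatrix; rw [Finset.inter_comm]

lemma pathMatrix_diff (w : Sym2 V → ℝ) {a b : {v : V // v ≠ T.root}}
    (hab : T.IsParent a.1 b.1) (c : {v : V // v ≠ T.root}) :
    T.pathMatrix w a c = T.pathMatrix w b c +
      w s(a.1, b.1) * (if T.Descendant c.1 a.1 then (1 : ℝ) else 0) := by
  obtain ⟨hins, hnot⟩ := T.pathEdges_parent hab
  unfold pathMatrix
  rw [hins]
  by_cases hc : s(a.1, b.1) ∈ T.pathEdges c.1
  · rw [Finset.insert_inter_of_mem hc, Finset.sum_insert (fun hm => hnot (Finset.mem_of_mem_inter_left hm)),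
      if_pos ((T.descendant_iff_edge hab c.1).2 hc)]
    ring
  · rw [Finset.insert_inter_of_notMem hc,
      if_neg (fun hd => hc ((T.descendant_iff_edge hab c.1).1 hd))]
    ring

lemma pathMatrix_diff' (w : Sym2 V → ℝ) {a b : {v : V // v ≠ T.root}}
    (hab : T.IsParent a.1 b.1) (c : {v : V // v ≠ T.root}) :
    T.pathMatrix w c a = T.pathMatrix w c b +
      w s(a.1, b.1) * (if T.Descendant c.1 a.1 then (1 : ℝ) else 0) := by
  rw [T.pathMatrix_symm w c a, T.pathMatrix_diff w hab c, T.pathMatrix_symm w b c]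

end GridTree

/-- **Lemma 3.** In the LC-PF model with
`Σ_ε = K_r Σ_p K_r + K_x Σ_q K_x + K_r Σ_pq K_x + (K_r Σ_pq K_x)ᵀ`, with `Σ_p, Σ_q`
symmetric, for a non-root vertex `a` with non-root parent `b`:
`Σ_ε(a,a) - Σ_ε(a,b) - Σ_ε(b,a) + Σ_ε(b,b)
  = ∑_{c,d ∈ D_a} [r_{ab}² Σ_p(c,d) + x_{ab}² Σ_q(c,d) + 2 r_{ab} x_{ab} Σ_pq(c,d)]`. -/
theorem lcpf_expected_squared_difference
    {V : Type*} [Fintype V] [DecidableEq V] (T : GridTree V)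
    (r x : Sym2 V → ℝ)
    (Sp Sq Spq : Matrix {v : V // v ≠ T.root} {v : V // v ≠ T.root} ℝ)
    (hpsym : Sp.IsSymm) (hqsym : Sq.IsSymm)
    (a b : {v : V // v ≠ T.root}) (hab : T.IsParent a.1 b.1) :
    (T.pathMatrix r * Sp * T.pathMatrix r + T.pathMatrix x * Sq * T.pathMatrix x +
        T.pathMatrix r * Spq * T.pathMatrix x +
        (T.pathMatrix r * Spq * T.pathMatrix x)ᵀ) a a -
      (T.pathMatrix r * Sp * T.pathMatrix r + T.pathMatrix x * Sq * T.pathMatrix x +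
        T.pathMatrix r * Spq * T.pathMatrix x +
        (T.pathMatrix r * Spq * T.pathMatrix x)ᵀ) a b -
      (T.pathMatrix r * Sp * T.pathMatrix r + T.pathMatrix x * Sq * T.pathMatrix x +
        T.pathMatrix r * Spq * T.pathMatrix x +
        (T.pathMatrix r * Spq * T.pathMatrix x)ᵀ) b a +
      (T.pathMatrix r * Sp * T.pathMatrix r + T.pathMatrix x * Sq * T.pathMatrix x +
        T.pathMatrix r * Spq * T.pathMatrix x +
        (T.pathMatrix r * Spq * T.pathMatrix x)ᵀ) b b =
    ∑ c ∈ Finset.univ.filter (fun c : {v : V // v ≠ T.root} => T.Descendant c.1 a.1),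
      ∑ d ∈ Finset.univ.filter (fun d : {v : V // v ≠ T.root} => T.Descendant d.1 a.1),
        ((r s(a.1, b.1)) ^ 2 * Sp c d + (x s(a.1, b.1)) ^ 2 * Sq c d +
          2 * r s(a.1, b.1) * x s(a.1, b.1) * Spq c d) := by
  have hRHS : (∑ c ∈ Finset.univ.filter (fun c : {v : V // v ≠ T.root} => T.Descendant c.1 a.1),
      ∑ d ∈ Finset.univ.filter (fun d : {v : V // v ≠ T.root} => T.Descendant d.1 a.1),
        ((r s(a.1, b.1)) ^ 2 * Sp c d + (x s(a.1, b.1)) ^ 2 * Sq c d +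
          2 * r s(a.1, b.1) * x s(a.1, b.1) * Spq c d))
      = ∑ j : {v : V // v ≠ T.root}, ∑ k : {v : V // v ≠ T.root},
          (if T.Descendant k.1 a.1 then (1 : ℝ) else 0) *
          (if T.Descendant j.1 a.1 then (1 : ℝ) else 0) *
          ((r s(a.1, b.1)) ^ 2 * Sp k j + (x s(a.1, b.1)) ^ 2 * Sq k j +
            2 * r s(a.1, b.1) * x s(a.1, b.1) * Spq k j) := by
    rw [Finset.sum_comm]
    simp only [Finset.sum_filter]
    refine Finset.sum_congr rfl fun j _ => ?_
    by_cases hj : T.Descendant j.1 a.1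
    · simp only [hj, if_true, mul_one]
      refine Finset.sum_congr rfl fun k _ => ?_
      by_cases hk : T.Descendant k.1 a.1 <;> simp [hk]
    · simp [hj]
  rw [hRHS]
  simp only [Matrix.add_apply, Matrix.transpose_apply, Matrix.mul_apply, Finset.sum_mul]
  simp only [← Finset.sum_add_distrib, ← Finset.sum_sub_distrib]
  refine Finset.sum_congr rfl fun j _ => Finset.sum_congr rfl fun k _ => ?_
  rw [T.pathMatrix_diff r hab k, T.pathMatrix_diff x hab k,
    T.pathMatrix_diff' r hab j, T.pathMatrix_diff' x hab j]
  ring
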